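/- arXiv:1712.04900 — 3 statements merged into one kernel-verified Lean document; each statement's English description precedes it below -/
import Mathlib

section
/- For positive reals L₁, L₂, L₃ and an integer q ≥ 2, and integer l with 2 ≤ l ≤ q, the determinant of the 3×3 matrix with columns (1, l, q+1), (0, L₂(q−l+1)(1−q), L₃(q−l+1)(l−2)), and (−L₁q(q−l+1), −L₂, L₃(q−l+2)) equals −q(q−l+1)²·(L₂L₃ + L₁L₃·l(l−2) + L₁L₂(q²−1)), and in particular is strictly negative. -/
open Matrix

theorem det_step2_neg (L₁ L₂ L₃ : ℝ) (hL₁ : 0 < L₁) (hL₂ : 0 < L₂) (hL₃ : 0 < L₃)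
    (q l : ℤ) (hq : 2 ≤ q) (hl : 2 ≤ l) (hlq : l ≤ q) :
    Matrix.det !![(1 : ℝ), 0, -L₁ * q * (q - l + 1);
                  (l : ℝ), L₂ * (q - l + 1) * (1 - q), -L₂;
                  ((q : ℝ) + 1), L₃ * (q - l + 1) * (l - 2), L₃ * (q - l + 2)]
      = -q * (q - l + 1) ^ 2 * (L₂ * L₃ + L₁ * L₃ * l * (l - 2) + L₁ * L₂ * (q ^ 2 - 1)) ∧
    Matrix.det !![(1 : ℝ), 0, -L₁ * q * (q - l + 1);
                  (l : ℝ), L₂ * (q - l + 1) * (1 - q), -L₂;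
                  ((q : ℝ) + 1), L₃ * (q - l + 1) * (l - 2), L₃ * (q - l + 2)] < 0 := by
  have hdet : Matrix.det !![(1 : ℝ), 0, -L₁ * q * (q - l + 1);
                  (l : ℝ), L₂ * (q - l + 1) * (1 - q), -L₂;
                  ((q : ℝ) + 1), L₃ * (q - l + 1) * (l - 2), L₃ * (q - l + 2)]
      = -q * (q - l + 1) ^ 2 * (L₂ * L₃ + L₁ * L₃ * l * (l - 2) + L₁ * L₂ * (q ^ 2 - 1)) := by
    rw [Matrix.det_fin_three]
    simp [Matrix.cons_val_zero, Matrix.cons_val_one]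
    ring
  refine ⟨hdet, ?_⟩
  rw [hdet]
  have hq' : (2 : ℝ) ≤ (q : ℝ) := by exact_mod_cast hq
  have hl' : (2 : ℝ) ≤ (l : ℝ) := by exact_mod_cast hl
  have hlq' : (l : ℝ) ≤ (q : ℝ) := by exact_mod_cast hlq
  have h1 : (0 : ℝ) < (q : ℝ) := by linarith
  have h2 : (0 : ℝ) < ((q : ℝ) - l + 1) ^ 2 := by nlinarith
  have h3 : (0 : ℝ) < L₂ * L₃ + L₁ * L₃ * l * (l - 2) + L₁ * L₂ * (q ^ 2 - 1) := by
    have : (0 : ℝ) ≤ L₁ * L₃ * l * (l - 2) := by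
      have := mul_nonneg (mul_nonneg (by positivity : (0:ℝ) ≤ L₁ * L₃) (by linarith : (0:ℝ) ≤ (l:ℝ))) (by linarith : (0:ℝ) ≤ (l:ℝ) - 2)
      linarith [this]
    have hq2 : (0 : ℝ) < (q : ℝ) ^ 2 - 1 := by nlinarith
    nlinarith [mul_pos hL₂ hL₃, mul_pos (mul_pos hL₁ hL₂) hq2]
  nlinarith [mul_pos (mul_pos h1 h2) h3]
end

section
/- For positive reals L₁, L₂, L₃ and integers q, n₁, n₂ with 2 ≤ n₁ ≤ q and 2 ≤ n₂ ≤ q, the determinant of the 3×3 matrix with rows (n₁, 0, −L₁q(q−n₂+1)), (n₂, L₂(q−n₂+1)(1−q), L₂(q−n₁+1)), (q+1, L₃(q−n₂+1)(n₂−2), L₃(n₁−1)(q−n₂+1)−L₃(q−n₁+1)) equals −q(q−n₂+1)²·(L₂L₃n₁(n₁−2) + L₁L₃n₂(n₂−2) + L₁L₂(q²−1)), and in particular is strictly negative. -/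
open Matrix

theorem det_induction_matrix {R : Type*} [CommRing R] (L₁ L₂ L₃ q n₁ n₂ : R) :
    det !![n₁, 0, -L₁ * q * (q - n₂ + 1);
           n₂, L₂ * (q - n₂ + 1) * (1 - q), L₂ * (q - n₁ + 1);
           q + 1, L₃ * (q - n₂ + 1) * (n₂ - 2), L₃ * (n₁ - 1) * (q - n₂ + 1) - L₃ * (q - n₁ + 1)]
      = -q * (q - n₂ + 1) ^ 2 *
          (L₂ * L₃ * n₁ * (n₁ - 2) + L₁ * L₃ * n₂ * (n₂ - 2) + L₁ * L₂ * (q ^ 2 - 1)) := by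
  rw [det_fin_three]
  simp only [of_apply, cons_val', cons_val_zero, cons_val_one, cons_val_two, head_cons,
    tail_cons, empty_val', cons_val_fin_one, head_fin_const]
  ring

theorem det_induction_factor_pos {L₁ L₂ L₃ q n₁ n₂ : ℝ} (hL₁ : 0 < L₁) (hL₂ : 0 < L₂)
    (hL₃ : 0 < L₃) (hn₁ : 2 ≤ n₁) (hn₂ : 2 ≤ n₂) (hn₂q : n₂ ≤ q) :
    0 < L₂ * L₃ * n₁ * (n₁ - 2) + L₁ * L₃ * n₂ * (n₂ - 2) + L₁ * L₂ * (q ^ 2 - 1) := by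
  have h₁ : 0 ≤ n₁ - 2 := sub_nonneg.2 hn₁
  have h₂ : 0 ≤ n₂ - 2 := sub_nonneg.2 hn₂
  have hq : 0 < q ^ 2 - 1 := by nlinarith
  positivity

theorem det_induction_neg_general (L₁ L₂ L₃ : ℝ) (hL₁ : 0 < L₁) (hL₂ : 0 < L₂) (hL₃ : 0 < L₃)
    (q n₁ n₂ : ℤ) (hn₁ : 2 ≤ n₁) (hn₂ : 2 ≤ n₂) (hn₂q : n₂ ≤ q) :
    Matrix.det !![(n₁ : ℝ), 0, -L₁ * q * (q - n₂ + 1);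
                  (n₂ : ℝ), L₂ * (q - n₂ + 1) * (1 - q), L₂ * (q - n₁ + 1);
                  ((q : ℝ) + 1), L₃ * (q - n₂ + 1) * (n₂ - 2),
                    L₃ * (n₁ - 1) * (q - n₂ + 1) - L₃ * (q - n₁ + 1)]
      = -q * (q - n₂ + 1) ^ 2 *
          (L₂ * L₃ * n₁ * (n₁ - 2) + L₁ * L₃ * n₂ * (n₂ - 2) + L₁ * L₂ * (q ^ 2 - 1)) ∧
    Matrix.det !![(n₁ : ℝ), 0, -L₁ * q * (q - n₂ + 1);
                  (n₂ : ℝ), L₂ * (q - n₂ + 1) * (1 - q), L₂ * (q - n₁ + 1);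
                  ((q : ℝ) + 1), L₃ * (q - n₂ + 1) * (n₂ - 2),
                    L₃ * (n₁ - 1) * (q - n₂ + 1) - L₃ * (q - n₁ + 1)] < 0 := by
  have hn₁' : (2 : ℝ) ≤ n₁ := by exact_mod_cast hn₁
  have hn₂' : (2 : ℝ) ≤ n₂ := by exact_mod_cast hn₂
  have hn₂q' : (n₂ : ℝ) ≤ q := by exact_mod_cast hn₂q
  refine ⟨det_induction_matrix .., ?_⟩
  rw [det_induction_matrix, neg_mul, neg_mul, neg_neg_iff_pos]
  have hgap : (0 : ℝ) < q - n₂ + 1 := by linarith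
  have hq : (0 : ℝ) < q := by linarith
  exact mul_pos (mul_pos hq (pow_pos hgap 2))
    (det_induction_factor_pos hL₁ hL₂ hL₃ hn₁' hn₂' hn₂q')

theorem det_induction_neg (L₁ L₂ L₃ : ℝ) (hL₁ : 0 < L₁) (hL₂ : 0 < L₂) (hL₃ : 0 < L₃)
    (q n₁ n₂ : ℤ) (hn₁ : 2 ≤ n₁) (hn₁q : n₁ ≤ q) (hn₂ : 2 ≤ n₂) (hn₂q : n₂ ≤ q) :
    Matrix.det !![(n₁ : ℝ), 0, -L₁ * q * (q - n₂ + 1);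
                  (n₂ : ℝ), L₂ * (q - n₂ + 1) * (1 - q), L₂ * (q - n₁ + 1);
                  ((q : ℝ) + 1), L₃ * (q - n₂ + 1) * (n₂ - 2),
                    L₃ * (n₁ - 1) * (q - n₂ + 1) - L₃ * (q - n₁ + 1)]
      = -q * (q - n₂ + 1) ^ 2 *
          (L₂ * L₃ * n₁ * (n₁ - 2) + L₁ * L₃ * n₂ * (n₂ - 2) + L₁ * L₂ * (q ^ 2 - 1)) ∧
    Matrix.det !![(n₁ : ℝ), 0, -L₁ * q * (q - n₂ + 1);
                  (n₂ : ℝ), L₂ * (q - n₂ + 1) * (1 - q), L₂ * (q - n₁ + 1);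
                  ((q : ℝ) + 1), L₃ * (q - n₂ + 1) * (n₂ - 2),
                    L₃ * (n₁ - 1) * (q - n₂ + 1) - L₃ * (q - n₁ + 1)] < 0 :=
  det_induction_neg_general L₁ L₂ L₃ hL₁ hL₂ hL₃ q n₁ n₂ hn₁ hn₂ hn₂q
end

section
/- Let L₁, L₂, L₃ > 0 and k ∈ ℕ³ with all components positive, and w ∈ ℝ³ with w₁k₁/L₁ + w₂k₂/L₂ + w₃k₃/L₃ = 0. Then the curl of the vector field V(x) = −(π/2)·(w₁ sin(2k₁πx₁/L₁)(w₃k₃/L₃ cos²(k₂πx₂/L₂) + w₂k₂/L₂ cos²(k₃πx₃/L₃)), w₂ sin(2k₂πx₂/L₂)(w₃k₃/L₃ cos²(k₁πx₁/L₁) + w₁k₁/L₁ cos²(k₃πx₃/L₃)), w₃ sin(2k₃πx₃/L₃)(w₁k₁/L₁ cos²(k₂πx₂/L₂) + w₂k₂/L₂ cos²(k₁πx₁/L₁))) has first component (π²/2)·(w₁k₁/L₁)·sin(2k₂πx₂/L₂)sin(2k₃πx₃/L₃)·(w₃k₂/L₂ − w₂k₃/L₃). -/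
open Real

lemma cos_sq_hasDerivAt (a L x : ℝ) :
    HasDerivAt (fun t : ℝ => Real.cos (a * π * t / L) ^ 2)
      (2 * Real.cos (a * π * x / L) ^ 1 * (-Real.sin (a * π * x / L) * (a * π / L))) x := by
  have hg : HasDerivAt (fun t : ℝ => a * π * t / L) (a * π / L) x := by
    have : HasDerivAt (fun t : ℝ => (a * π) * t) (a * π) x := by
      simpa using (hasDerivAt_id x).const_mul (a * π)
    simpa [mul_assoc, mul_comm, mul_left_comm] using this.div_const L
  have hc : HasDerivAt (fun t : ℝ => Real.cos (a * π * t / L))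
      (-Real.sin (a * π * x / L) * (a * π / L)) x :=
    (Real.hasDerivAt_cos _).comp x hg
  exact hc.pow 2

/-- First component of the curl of the self-interaction field:
`(curl V)₁ = ∂₂ V₃ - ∂₃ V₂`. -/
theorem curl_first_component (L₁ L₂ L₃ : ℝ) (hL₁ : 0 < L₁) (hL₂ : 0 < L₂) (hL₃ : 0 < L₃)
    (k₁ k₂ k₃ : ℕ) (hk₁ : 0 < k₁) (hk₂ : 0 < k₂) (hk₃ : 0 < k₃)
    (w₁ w₂ w₃ : ℝ)
    (hperp : w₁ * k₁ / L₁ + w₂ * k₂ / L₂ + w₃ * k₃ / L₃ = 0) :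
    ∀ x₁ x₂ x₃ : ℝ,
      deriv (fun t : ℝ =>
          -(π / 2) * (w₃ * Real.sin (2 * k₃ * π * x₃ / L₃)
            * (w₁ * k₁ / L₁ * Real.cos (k₂ * π * t / L₂) ^ 2
              + w₂ * k₂ / L₂ * Real.cos (k₁ * π * x₁ / L₁) ^ 2))) x₂
      - deriv (fun t : ℝ =>
          -(π / 2) * (w₂ * Real.sin (2 * k₂ * π * x₂ / L₂)
            * (w₃ * k₃ / L₃ * Real.cos (k₁ * π * x₁ / L₁) ^ 2
              + w₁ * k₁ / L₁ * Real.cos (k₃ * π * t / L₃) ^ 2))) x₃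
      = (π ^ 2 / 2) * (w₁ * k₁ / L₁) * Real.sin (2 * k₂ * π * x₂ / L₂)
          * Real.sin (2 * k₃ * π * x₃ / L₃) * (w₃ * k₂ / L₂ - w₂ * k₃ / L₃) := by
  intro x₁ x₂ x₃
  have h₂ := (((cos_sq_hasDerivAt (k₂ : ℝ) L₂ x₂).const_mul (w₁ * k₁ / L₁)).add_const
      (w₂ * k₂ / L₂ * Real.cos (k₁ * π * x₁ / L₁) ^ 2)).const_mul
      (w₃ * Real.sin (2 * k₃ * π * x₃ / L₃))
  have h₂' := (h₂.const_mul (-(π / 2))).deriv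
  have h₃ := (((cos_sq_hasDerivAt (k₃ : ℝ) L₃ x₃).const_mul (w₁ * k₁ / L₁)).const_add
      (w₃ * k₃ / L₃ * Real.cos (k₁ * π * x₁ / L₁) ^ 2)).const_mul
      (w₂ * Real.sin (2 * k₂ * π * x₂ / L₂))
  have h₃' := (h₃.const_mul (-(π / 2))).deriv
  rw [h₂', h₃']
  rw [show (2 * (k₂:ℝ) * π * x₂ / L₂ : ℝ) = 2 * ((k₂:ℝ) * π * x₂ / L₂) by ring,
      show (2 * (k₃:ℝ) * π * x₃ / L₃ : ℝ) = 2 * ((k₃:ℝ) * π * x₃ / L₃) by ring,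
      Real.sin_two_mul, Real.sin_two_mul]
  ring
end
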